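/- Assume $p \nmid k/d$ where $d = \gcd(n,k)$, and $L \circ L'(X) = X - X^{p^k}$ for $p$-linearized polynomials $L, L'$ over $\mathbb{F}_p$. Then $L(x) = a$ has a solution $x \in \mathbb{F}_{p^n}$ if and only if $L'(T_d^n(a)) = 0$. -/
import Mathlib

open Polynomial

noncomputable def Tpoly (p l k : ℕ) : Polynomial (ZMod p) :=
  ∑ i ∈ Finset.range (k / l), X ^ p ^ (l * i)

noncomputable def Spoly (p l k : ℕ) : Polynomial (ZMod p) :=
  ∑ i ∈ Finset.range (k / l), C ((-1 : ZMod p) ^ i) * X ^ p ^ (l * i)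

noncomputable def linAssoc (p : ℕ) (l : Polynomial (ZMod p)) : Polynomial (ZMod p) :=
  ∑ i ∈ l.support, C (l.coeff i) * X ^ p ^ i

namespace LinHelper

variable {p : ℕ} [Fact p.Prime]

theorem linAssoc_def (f : Polynomial (ZMod p)) :
    linAssoc p f = f.sum fun i c => C c * X ^ p ^ i := by
  unfold linAssoc; rw [Polynomial.sum_def]

theorem linAssoc_add (f g : Polynomial (ZMod p)) :
    linAssoc p (f + g) = linAssoc p f + linAssoc p g := by
  simp only [linAssoc_def]
  exact Polynomial.sum_add_index f g _ (fun i => by simp) (fun i a b => by rw [C_add, add_mul])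

theorem linAssoc_monomial (i : ℕ) (c : ZMod p) :
    linAssoc p (monomial i c) = C c * X ^ p ^ i := by
  rw [linAssoc_def]
  exact Polynomial.sum_monomial_index c _ (by simp)

theorem linAssoc_zero : linAssoc p (0 : Polynomial (ZMod p)) = 0 := by
  simp [linAssoc]

/-- `linAssoc` as an additive monoid hom. -/
noncomputable def linH (p : ℕ) [Fact p.Prime] :
    Polynomial (ZMod p) →+ Polynomial (ZMod p) where
  toFun := linAssoc p
  map_zero' := linAssoc_zero
  map_add' := linAssoc_add

theorem linAssoc_pow (g : Polynomial (ZMod p)) (i : ℕ) :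
    linAssoc p g ^ p ^ i = linAssoc p (X ^ i * g) := by
  induction g using Polynomial.induction_on' with
  | add f g hf hg =>
      rw [linAssoc_add, add_pow_char_pow, hf, hg, mul_add, linAssoc_add]
  | monomial j c =>
      have h1 : (X : Polynomial (ZMod p)) ^ i * monomial j c = monomial (i + j) c := by
        rw [← C_mul_X_pow_eq_monomial, ← C_mul_X_pow_eq_monomial, pow_add]
        ring
      have h2 : p ^ j * p ^ i = p ^ (i + j) := by rw [← pow_add, Nat.add_comm]
      rw [linAssoc_monomial, h1, linAssoc_monomial, mul_pow, ← C_pow, ZMod.pow_card_pow,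
        ← pow_mul, h2]

theorem linAssoc_C_mul (c : ZMod p) (g : Polynomial (ZMod p)) :
    linAssoc p (C c * g) = C c * linAssoc p g := by
  induction g using Polynomial.induction_on' with
  | add f g hf hg => rw [mul_add, linAssoc_add, hf, hg, linAssoc_add, mul_add]
  | monomial j a =>
      rw [C_mul_monomial, linAssoc_monomial, linAssoc_monomial, C_mul, mul_assoc]

theorem linAssoc_comp (f g : Polynomial (ZMod p)) :
    (linAssoc p f).comp (linAssoc p g) = linAssoc p (f * g) := by
  induction f using Polynomial.induction_on' with
  | add f1 f2 h1 h2 => rw [linAssoc_add, add_comp, h1, h2, add_mul, linAssoc_add]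
  | monomial j c =>
      rw [linAssoc_monomial, mul_comp, C_comp, pow_comp, X_comp, linAssoc_pow,
        ← linAssoc_C_mul, ← mul_assoc, C_mul_X_pow_eq_monomial]

theorem linAssoc_coeff (f : Polynomial (ZMod p)) (i : ℕ) :
    (linAssoc p f).coeff (p ^ i) = f.coeff i := by
  have hinj : Function.Injective (p ^ · : ℕ → ℕ) :=
    Nat.pow_right_injective (Fact.out : p.Prime).two_le
  rw [linAssoc, Polynomial.finset_sum_coeff]
  simp only [coeff_C_mul, coeff_X_pow]
  rcases Decidable.em (i ∈ f.support) with hi | hi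
  · rw [Finset.sum_eq_single i]
    · simp
    · intro j hj hne
      rw [if_neg fun hpe => hne (hinj hpe.symm), mul_zero]
    · intro hni; exact absurd hi hni
  · rw [Polynomial.notMem_support_iff.mp hi, Finset.sum_eq_zero]
    intro j hj
    rcases Decidable.em (p ^ i = p ^ j) with hpe | hpe
    · obtain rfl := hinj hpe
      exact absurd hj hi
    · rw [if_neg hpe, mul_zero]

theorem linAssoc_injective : Function.Injective (linAssoc p) := by
  intro f g hfg
  ext i
  rw [← linAssoc_coeff f i, ← linAssoc_coeff g i, hfg]

theorem linAssoc_mul_dvd (u f : Polynomial (ZMod p)) :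
    linAssoc p f ∣ linAssoc p (u * f) := by
  induction u using Polynomial.induction_on' with
  | add u1 u2 h1 h2 => rw [add_mul, linAssoc_add]; exact dvd_add h1 h2
  | monomial j c =>
      rw [← C_mul_X_pow_eq_monomial, mul_assoc, linAssoc_C_mul, ← linAssoc_pow]
      exact Dvd.dvd.mul_left (dvd_pow_self _ (Nat.pow_pos (Fact.out : p.Prime).pos).ne') _

theorem linAssoc_dvd {f g : Polynomial (ZMod p)} (hfg : f ∣ g) :
    linAssoc p f ∣ linAssoc p g := by
  obtain ⟨u, rfl⟩ := hfg
  rw [mul_comm]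
  exact linAssoc_mul_dvd u f

theorem linAssoc_one_sub_X_pow (k : ℕ) (hk : 0 < k) :
    linAssoc p (1 - X ^ k) = X - X ^ p ^ k := by
  have h1 : (1 - X ^ k : Polynomial (ZMod p)) = monomial 0 1 + monomial k (-1) := by
    simp [← C_mul_X_pow_eq_monomial, sub_eq_add_neg]
  rw [h1, linAssoc_add, linAssoc_monomial, linAssoc_monomial]
  simp [sub_eq_add_neg]

theorem linAssoc_X_pow_sub_one (m : ℕ) :
    linAssoc p (X ^ m - 1) = X ^ p ^ m - X := by
  have h1 : (X ^ m - 1 : Polynomial (ZMod p)) = monomial m 1 + monomial 0 (-1) := by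
    simp [← C_mul_X_pow_eq_monomial, sub_eq_add_neg]
  rw [h1, linAssoc_add, linAssoc_monomial, linAssoc_monomial]
  simp [sub_eq_add_neg]

end LinHelper

namespace Eval

variable {p : ℕ} [Fact p.Prime] {n : ℕ}

open LinHelper

theorem aeval_linAssoc_zero (f : Polynomial (ZMod p)) :
    aeval (0 : GaloisField p n) (linAssoc p f) = 0 := by
  induction f using Polynomial.induction_on' with
  | add f g hf hg => rw [linAssoc_add, map_add, hf, hg, add_zero]
  | monomial j c =>
      rw [linAssoc_monomial]
      have : (0 : GaloisField p n) ^ p ^ j = 0 :=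
        zero_pow (Nat.pow_pos (Fact.out : p.Prime).pos).ne'
      simp [this]

theorem aeval_linAssoc_add (f : Polynomial (ZMod p)) (x y : GaloisField p n) :
    aeval (x + y) (linAssoc p f) = aeval x (linAssoc p f) + aeval y (linAssoc p f) := by
  induction f using Polynomial.induction_on' with
  | add f g hf hg =>
      rw [linAssoc_add, map_add, map_add, map_add, hf, hg]
      ring
  | monomial j c =>
      rw [linAssoc_monomial]
      simp only [map_mul, aeval_C, map_pow, aeval_X]
      rw [add_pow_char_pow, mul_add]

/-- Evaluation of a linearized polynomial as an additive map. -/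
noncomputable def phi (p : ℕ) [Fact p.Prime] (n : ℕ) (f : Polynomial (ZMod p)) :
    GaloisField p n →+ GaloisField p n where
  toFun x := aeval x (linAssoc p f)
  map_zero' := aeval_linAssoc_zero f
  map_add' := aeval_linAssoc_add f

theorem phi_apply (f : Polynomial (ZMod p)) (x : GaloisField p n) :
    phi p n f x = aeval x (linAssoc p f) := rfl

theorem phi_mul (f g : Polynomial (ZMod p)) (x : GaloisField p n) :
    phi p n (f * g) x = phi p n f (phi p n g x) := by
  rw [phi_apply, phi_apply, phi_apply, ← linAssoc_comp, aeval_comp]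

theorem pow_card_self (hn : 0 < n) (x : GaloisField p n) : x ^ p ^ n = x := by
  letI : Fintype (GaloisField p n) := Fintype.ofFinite _
  have hc : Fintype.card (GaloisField p n) = p ^ n := by
    rw [← Nat.card_eq_fintype_card, GaloisField.card p n hn.ne']
  rw [← hc, FiniteField.pow_card]

theorem phi_X_pow_sub_one (hn : 0 < n) (x : GaloisField p n) :
    phi p n (X ^ n - 1) x = 0 := by
  rw [phi_apply, linAssoc_X_pow_sub_one]
  simp [pow_card_self hn x]

theorem card_eq_card_range_mul_card_ker {G H : Type*} [AddGroup G] [AddGroup H] (φ : G →+ H) :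
    Nat.card G = Nat.card φ.range * Nat.card φ.ker := by
  rw [AddSubgroup.card_eq_card_quotient_mul_card_addSubgroup φ.ker,
    Nat.card_congr (QuotientAddGroup.quotientKerEquivRange φ).toEquiv]

theorem linAssoc_natDegree (f : Polynomial (ZMod p)) (hf : f ≠ 0) :
    (linAssoc p f).natDegree = p ^ f.natDegree := by
  apply le_antisymm
  · apply Polynomial.natDegree_sum_le_of_forall_le
    intro i hi
    calc natDegree (C (f.coeff i) * X ^ p ^ i : Polynomial (ZMod p)) ≤ p ^ i := by
          apply (Polynomial.natDegree_C_mul_le _ _).trans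
          simp
      _ ≤ p ^ f.natDegree :=
          Nat.pow_le_pow_right (Fact.out : p.Prime).pos (Polynomial.le_natDegree_of_mem_supp i hi)
  · have hlc := Polynomial.leadingCoeff_ne_zero.mpr hf
    exact Polynomial.le_natDegree_of_ne_zero (by rw [linAssoc_coeff]; exact hlc)

theorem card_ker (hn : 0 < n) (f : Polynomial (ZMod p)) (hf : f ≠ 0) :
    Nat.card {x : GaloisField p n // aeval x (linAssoc p f) = 0}
      = p ^ (EuclideanDomain.gcd f (X ^ n - 1)).natDegree := by
  classical
  have hprime : p.Prime := Fact.out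
  set F := GaloisField p n
  set G := EuclideanDomain.gcd f (X ^ n - 1) with hGdef
  have hXn : (X ^ n - 1 : Polynomial (ZMod p)) ≠ 0 := by
    have := Polynomial.X_pow_sub_C_ne_zero hn (1 : ZMod p)
    simpa using this
  have hG0 : G ≠ 0 := fun h0 => hf ((EuclideanDomain.gcd_eq_zero_iff.mp h0).1)
  have hGf : G ∣ f := EuclideanDomain.gcd_dvd_left f _
  have hGX : G ∣ X ^ n - 1 := EuclideanDomain.gcd_dvd_right f _
  -- the two kernels agree
  have hset : ∀ x : F, aeval x (linAssoc p f) = 0 ↔ aeval x (linAssoc p G) = 0 := by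
    intro x
    constructor
    · intro hx
      have hb := EuclideanDomain.gcd_eq_gcd_ab f (X ^ n - 1)
      have h2 : G = EuclideanDomain.gcdA f (X ^ n - 1) * f
          + EuclideanDomain.gcdB f (X ^ n - 1) * (X ^ n - 1) := by
        rw [hGdef, hb]; ring
      have h3 : phi p n G x = phi p n (EuclideanDomain.gcdA f (X ^ n - 1) * f) x
          + phi p n (EuclideanDomain.gcdB f (X ^ n - 1) * (X ^ n - 1)) x := by
        rw [phi_apply, phi_apply, phi_apply, h2, linAssoc_add, map_add]
      have h4 : phi p n G x = 0 := by
        rw [h3, phi_mul, phi_mul]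
        have hx' : phi p n f x = 0 := hx
        have hX' : phi p n (X ^ n - 1) x = 0 := phi_X_pow_sub_one hn x
        rw [hx', hX', (phi p n _).map_zero, (phi p n _).map_zero, add_zero]
      exact h4
    · intro hx
      obtain ⟨u, hu⟩ := hGf
      have : phi p n f x = 0 := by
        rw [hu, mul_comm, phi_mul]
        have hx' : phi p n G x = 0 := hx
        rw [hx', (phi p n u).map_zero]
      exact this
  -- count roots of linAssoc G
  letI : Fintype F := Fintype.ofFinite F
  have hcard : Fintype.card F = p ^ n := by
    rw [← Nat.card_eq_fintype_card, GaloisField.card p n hn.ne']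
  set LGb := linAssoc p G with hLGbdef
  have hLGb0 : LGb ≠ 0 := fun h0 => hG0 (linAssoc_injective (show linAssoc p G = linAssoc p 0 by rw [← hLGbdef, h0, linAssoc_zero]))
  have hinj : Function.Injective (algebraMap (ZMod p) F) := (algebraMap (ZMod p) F).injective
  set LG := LGb.map (algebraMap (ZMod p) F) with hLGdef
  have hLG0 : LG ≠ 0 := (Polynomial.map_ne_zero_iff hinj).mpr hLGb0
  have hdvdb : LGb ∣ linAssoc p (X ^ n - 1) := linAssoc_dvd hGX
  set P := (X ^ p ^ n - X : Polynomial F) with hPdef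
  have hP0 : P ≠ 0 := FiniteField.X_pow_card_pow_sub_X_ne_zero F hn.ne' hprime.one_lt
  have hdvd : LG ∣ P := by
    have h5 := Polynomial.map_dvd (algebraMap (ZMod p) F) hdvdb
    rwa [linAssoc_X_pow_sub_one, Polynomial.map_sub, Polynomial.map_pow, Polynomial.map_X] at h5
  have hProots : P.roots = Finset.univ.val := by
    have h6 := FiniteField.roots_X_pow_card_sub_X F
    rw [hcard] at h6
    exact h6
  have hPdeg : P.natDegree = p ^ n := by
    have := FiniteField.X_pow_card_pow_sub_X_natDegree_eq F hn.ne' hprime.one_lt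
    exact this
  obtain ⟨M, hM⟩ := hdvd
  have hM0 : M ≠ 0 := by
    intro h0; rw [h0, mul_zero] at hM; exact hP0 hM
  have hrootsP : LG.roots + M.roots = Finset.univ.val := by
    rw [← Polynomial.roots_mul (by rw [← hM]; exact hP0), ← hM, hProots]
  have hcount : Multiset.card LG.roots = LG.natDegree := by
    have h1 := Polynomial.card_roots' LG
    have h2 := Polynomial.card_roots' M
    have h3 : Multiset.card LG.roots + Multiset.card M.roots = p ^ n := by
      rw [← Multiset.card_add, hrootsP, ← Finset.card_def, Finset.card_univ, hcard]
    have h4 : LG.natDegree + M.natDegree = p ^ n := by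
      rw [← Polynomial.natDegree_mul hLG0 hM0, ← hM, hPdeg]
    omega
  have hnodup : LG.roots.Nodup := by
    have hle : LG.roots ≤ Finset.univ.val := hrootsP ▸ Multiset.le_add_right _ _
    exact Multiset.nodup_of_le hle Finset.univ.nodup
  have hmem : ∀ x : F, aeval x (linAssoc p G) = 0 ↔ x ∈ LG.roots := by
    intro x
    rw [Polynomial.mem_roots hLG0, Polynomial.IsRoot, hLGdef, Polynomial.eval_map,
      ← Polynomial.aeval_def]
  have hsetq : {x : F | aeval x (linAssoc p f) = 0} = (LG.roots.toFinset : Set F) := by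
    ext x
    simp only [Set.mem_setOf_eq, Finset.mem_coe, Multiset.mem_toFinset]
    rw [hset x, hmem x]
  calc Nat.card {x : F // aeval x (linAssoc p f) = 0}
      = ({x : F | aeval x (linAssoc p f) = 0} : Set F).ncard := Nat.card_coe_set_eq _
    _ = (LG.roots.toFinset : Set F).ncard := by rw [hsetq]
    _ = LG.roots.toFinset.card := Set.ncard_coe_finset _
    _ = Multiset.card LG.roots := Multiset.toFinset_card_of_nodup hnodup
    _ = LG.natDegree := hcount
    _ = LGb.natDegree := Polynomial.natDegree_map _
    _ = p ^ G.natDegree := linAssoc_natDegree G hG0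

end Eval

namespace Arith

open LinHelper

variable {p : ℕ} [Fact p.Prime]

theorem coprime_of_squarefree_mul {a b : Polynomial (ZMod p)} (h : Squarefree (a * b)) :
    IsCoprime a b := by
  classical
  rw [← EuclideanDomain.gcd_isUnit_iff]
  exact h _ (mul_dvd_mul (EuclideanDomain.gcd_dvd_left a b) (EuclideanDomain.gcd_dvd_right a b))

theorem X_pow_sub_one_ne_zero {m : ℕ} (hm : 0 < m) :
    (X ^ m - 1 : Polynomial (ZMod p)) ≠ 0 := by
  have := Polynomial.X_pow_sub_C_ne_zero hm (1 : ZMod p)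
  simpa using this

theorem natDegree_X_pow_sub_one {m : ℕ} :
    (X ^ m - 1 : Polynomial (ZMod p)).natDegree = m := by
  have := Polynomial.natDegree_X_pow_sub_C (n := m) (r := (1 : ZMod p))
  simpa using this

theorem squarefree_X_pow_sub_one {m : ℕ} (hpm : ¬ p ∣ m) :
    Squarefree (X ^ m - 1 : Polynomial (ZMod p)) := by
  have hsep : Polynomial.Separable (X ^ m - C (1 : ZMod p)) := by
    apply Polynomial.separable_X_pow_sub_C
    · rw [Ne, ZMod.natCast_eq_zero_iff]
      exact hpm
    · exact one_ne_zero
  have := hsep.squarefree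
  simpa using this

theorem X_pow_sub_one_dvd {a b : ℕ} (hab : a ∣ b) :
    (X ^ a - 1 : Polynomial (ZMod p)) ∣ X ^ b - 1 := by
  obtain ⟨c, rfl⟩ := hab
  have := sub_dvd_pow_sub_pow (X ^ a : Polynomial (ZMod p)) 1 c
  simpa [← pow_mul] using this

theorem dvd_X_pow_gcd_sub_one {q : Polynomial (ZMod p)} {a b : ℕ}
    (h1 : q ∣ X ^ a - 1) (h2 : q ∣ X ^ b - 1) : q ∣ X ^ Nat.gcd a b - 1 := by
  classical
  set I := Ideal.span ({q} : Set (Polynomial (ZMod p))) with hI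
  have key : ∀ m : ℕ, q ∣ X ^ m - 1 ↔ (Ideal.Quotient.mk I X) ^ m = 1 := by
    intro m
    rw [← Ideal.Quotient.eq_zero_iff_dvd, map_sub, map_pow, map_one, sub_eq_zero]
  rw [key] at h1 h2 ⊢
  exact orderOf_dvd_iff_pow_eq_one.mp
    (Nat.dvd_gcd (orderOf_dvd_of_pow_eq_one h1) (orderOf_dvd_of_pow_eq_one h2))

theorem natDegree_eq_of_associated {a b : Polynomial (ZMod p)} (h : Associated a b) :
    a.natDegree = b.natDegree := by
  obtain ⟨u, rfl⟩ := h
  rcases eq_or_ne a 0 with rfl | ha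
  · simp
  · rw [Polynomial.natDegree_mul ha u.ne_zero,
      Polynomial.natDegree_eq_zero_of_isUnit u.isUnit, add_zero]

set_option maxHeartbeats 1000000 in
theorem key_degree (n k d : ℕ) (hn : 0 < n) (hk : 0 < k)
    (hd : d = Nat.gcd n k) (hpd : ¬ p ∣ k / d)
    (l l' : Polynomial (ZMod p)) (hll : l * l' = 1 - X ^ k) :
    (EuclideanDomain.gcd l (X ^ n - 1)).natDegree
      + (EuclideanDomain.gcd
          (l' * ∑ i ∈ Finset.range (n / d), ((X : Polynomial (ZMod p)) ^ d) ^ i)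
          (X ^ n - 1)).natDegree = n := by
  classical
  have hprime : p.Prime := Fact.out
  haveI : Nonempty (GCDMonoid (Polynomial (ZMod p))) := ⟨EuclideanDomain.gcdMonoid _⟩
  -- numerical setup
  set α := n.factorization p with hα
  set β := k.factorization p with hβ
  set n₀ := n / p ^ α with hn₀
  set k₀ := k / p ^ β with hk₀
  have hn0 : n ≠ 0 := hn.ne'
  have hk0 : k ≠ 0 := hk.ne'
  have hnfac : p ^ α * n₀ = n := Nat.ordProj_mul_ordCompl_eq_self n p
  have hkfac : p ^ β * k₀ = k := Nat.ordProj_mul_ordCompl_eq_self k p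
  have hpn₀ : ¬ p ∣ n₀ := Nat.not_dvd_ordCompl hprime hn0
  have hpk₀ : ¬ p ∣ k₀ := Nat.not_dvd_ordCompl hprime hk0
  have hdpos : 0 < d := hd ▸ Nat.gcd_pos_of_pos_left k hn
  have hdn : d ∣ n := hd ▸ Nat.gcd_dvd_left n k
  have hdk : d ∣ k := hd ▸ Nat.gcd_dvd_right n k
  have hd0 : d ≠ 0 := hdpos.ne'
  have hkdm : d * (k / d) = k := Nat.mul_div_cancel' hdk
  have hkd0 : k / d ≠ 0 := fun h0 => hk0 (by rw [← hkdm, h0, Nat.mul_zero])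
  have hβd : d.factorization p = β := by
    have h1 : k.factorization = d.factorization + (k / d).factorization := by
      rw [← Nat.factorization_mul hd0 hkd0, hkdm]
    have h2 : (k / d).factorization p = 0 := Nat.factorization_eq_zero_of_not_dvd hpd
    have h3 := congrArg (fun f => f p) h1
    simp only [Finsupp.add_apply] at h3
    omega
  have hβα : β ≤ α := by
    have h1 : p ^ β ∣ n := dvd_trans (hβd ▸ Nat.ordProj_dvd d p) hdn
    exact (Nat.Prime.pow_dvd_iff_le_factorization hprime hn0).mp h1
  set d₀ := d / p ^ β with hd₀
  have hdfac : p ^ β * d₀ = d := by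
    rw [hd₀, ← hβd]; exact Nat.ordProj_mul_ordCompl_eq_self d p
  have hpd₀ : ¬ p ∣ d₀ := by
    rw [hd₀, ← hβd]; exact Nat.not_dvd_ordCompl hprime hd0
  have hd₀0 : d₀ ≠ 0 := fun h0 => hd0 (by rw [← hdfac, h0, Nat.mul_zero])
  have hn₀0 : n₀ ≠ 0 := fun h0 => hn0 (by rw [← hnfac, h0, Nat.mul_zero])
  have hk₀0 : k₀ ≠ 0 := fun h0 => hk0 (by rw [← hkfac, h0, Nat.mul_zero])
  have hn₀pos : 0 < n₀ := Nat.pos_of_ne_zero hn₀0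
  have hcop : ∀ m : ℕ, ¬ p ∣ m → ∀ j : ℕ, Nat.Coprime m (p ^ j) := fun m hm j =>
    (((Nat.Prime.coprime_iff_not_dvd hprime).mpr hm).symm).pow_right j
  have hd₀n₀ : d₀ ∣ n₀ := by
    have h1 : d₀ ∣ n₀ * p ^ α := by
      rw [Nat.mul_comm, hnfac]
      exact dvd_trans (Dvd.intro_left _ hdfac) hdn
    exact (hcop d₀ hpd₀ α).dvd_of_dvd_mul_right h1
  have hd₀k₀ : d₀ ∣ k₀ := by
    have h1 : d₀ ∣ k₀ * p ^ β := by
      rw [Nat.mul_comm, hkfac]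
      exact dvd_trans (Dvd.intro_left _ hdfac) hdk
    exact (hcop d₀ hpd₀ β).dvd_of_dvd_mul_right h1
  have hg₀d₀ : Nat.gcd n₀ k₀ ∣ d₀ := by
    have h1 : Nat.gcd n₀ k₀ * p ^ β ∣ n := by
      rw [← hnfac, Nat.mul_comm (p ^ α) n₀]
      exact Nat.mul_dvd_mul (Nat.gcd_dvd_left n₀ k₀) (Nat.pow_dvd_pow p hβα)
    have h2 : Nat.gcd n₀ k₀ * p ^ β ∣ k := by
      rw [← hkfac, Nat.mul_comm (p ^ β) k₀]
      exact Nat.mul_dvd_mul (Nat.gcd_dvd_right n₀ k₀) dvd_rfl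
    have h3 : Nat.gcd n₀ k₀ * p ^ β ∣ d₀ * p ^ β := by
      rw [Nat.mul_comm d₀ (p ^ β), hdfac, hd]
      exact Nat.dvd_gcd h1 h2
    exact (Nat.mul_dvd_mul_iff_right (Nat.pow_pos hprime.pos)).mp h3
  -- polynomial setup
  set e := p ^ β with he
  set E := p ^ α with hE
  have heE : e ≤ E := Nat.pow_le_pow_right hprime.pos hβα
  set h₀ := (X ^ d₀ - 1 : Polynomial (ZMod p)) with hh₀
  have hh₀0 : h₀ ≠ 0 := X_pow_sub_one_ne_zero (Nat.pos_of_ne_zero hd₀0)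
  set r := ∑ i ∈ Finset.range (n₀ / d₀), ((X : Polynomial (ZMod p)) ^ d₀) ^ i with hrdef
  set s := ∑ i ∈ Finset.range (k₀ / d₀), ((X : Polynomial (ZMod p)) ^ d₀) ^ i with hsdef
  have hrh : r * h₀ = X ^ n₀ - 1 := by
    rw [hrdef, hh₀, geom_sum_mul, ← pow_mul, Nat.mul_div_cancel' hd₀n₀]
  have hsh : s * h₀ = X ^ k₀ - 1 := by
    rw [hsdef, hh₀, geom_sum_mul, ← pow_mul, Nat.mul_div_cancel' hd₀k₀]
  have hsqn : Squarefree (X ^ n₀ - 1 : Polynomial (ZMod p)) := squarefree_X_pow_sub_one hpn₀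
  have hsqk : Squarefree (X ^ k₀ - 1 : Polynomial (ZMod p)) := squarefree_X_pow_sub_one hpk₀
  have hr0 : r ≠ 0 := fun h0 =>
    X_pow_sub_one_ne_zero hn₀pos (by rw [← hrh, h0, zero_mul])
  have hs0 : s ≠ 0 := fun h0 =>
    X_pow_sub_one_ne_zero (Nat.pos_of_ne_zero hk₀0) (by rw [← hsh, h0, zero_mul])
  have hcop_ns : IsCoprime (X ^ n₀ - 1 : Polynomial (ZMod p)) s := by
    rw [← EuclideanDomain.gcd_isUnit_iff]
    by_contra hunit
    have hc0 : EuclideanDomain.gcd (X ^ n₀ - 1 : Polynomial (ZMod p)) s ≠ 0 := fun h0 =>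
      X_pow_sub_one_ne_zero hn₀pos (EuclideanDomain.gcd_eq_zero_iff.mp h0).1
    obtain ⟨q, hqirr, hqdvd⟩ := WfDvdMonoid.exists_irreducible_factor hunit hc0
    have hq1 : q ∣ X ^ n₀ - 1 := hqdvd.trans (EuclideanDomain.gcd_dvd_left _ _)
    have hqs : q ∣ s := hqdvd.trans (EuclideanDomain.gcd_dvd_right _ _)
    have hq2 : q ∣ X ^ k₀ - 1 := hqs.trans ⟨h₀, hsh.symm⟩
    have hq3 : q ∣ X ^ Nat.gcd n₀ k₀ - 1 := dvd_X_pow_gcd_sub_one hq1 hq2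
    have hqh₀ : q ∣ h₀ := hq3.trans (X_pow_sub_one_dvd hg₀d₀)
    have hq4 : q * q ∣ X ^ k₀ - 1 := by
      rw [← hsh]; exact mul_dvd_mul hqs hqh₀
    exact hqirr.not_isUnit (hsqk _ hq4)
  set g := (X ^ n - 1 : Polynomial (ZMod p)) with hgdef
  have hg0 : g ≠ 0 := X_pow_sub_one_ne_zero hn
  have hXk : (X ^ k - 1 : Polynomial (ZMod p)) = h₀ ^ e * s ^ e := by
    have h1 : (X ^ k₀ - 1 : Polynomial (ZMod p)) ^ e = X ^ k - 1 := by
      rw [he, sub_pow_char_pow, one_pow, ← pow_mul, Nat.mul_comm k₀ (p ^ β), hkfac]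
    rw [← h1, ← hsh, mul_pow]; exact mul_comm _ _
  have hpowg : (X ^ n₀ - 1 : Polynomial (ZMod p)) ^ E = g := by
    rw [hE, sub_pow_char_pow, one_pow, ← pow_mul, Nat.mul_comm n₀ (p ^ α), hnfac, hgdef]
  have hgfac : g = h₀ ^ E * r ^ E := by
    rw [← hpowg, ← hrh, mul_pow]; exact mul_comm _ _
  set t := ∑ i ∈ Finset.range (n / d), ((X : Polynomial (ZMod p)) ^ d) ^ i with htdef
  have hth : t * (X ^ d - 1) = g := by
    rw [htdef, geom_sum_mul, ← pow_mul, Nat.mul_div_cancel' hdn, hgdef]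
  have hXd : (X ^ d - 1 : Polynomial (ZMod p)) = h₀ ^ e := by
    rw [he, hh₀, sub_pow_char_pow, one_pow, ← pow_mul, Nat.mul_comm d₀ (p ^ β), hdfac]
  have ht : t = h₀ ^ (E - e) * r ^ E := by
    have h1 : t * h₀ ^ e = (h₀ ^ (E - e) * r ^ E) * h₀ ^ e := by
      rw [mul_right_comm, pow_sub_mul_pow h₀ heE, ← hgfac, ← hth, hXd]
    exact mul_right_cancel₀ (pow_ne_zero e hh₀0) h1
  have ht0 : t ≠ 0 := by
    rw [ht]; exact mul_ne_zero (pow_ne_zero _ hh₀0) (pow_ne_zero _ hr0)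
  -- decomposition of l
  have hlf : l ∣ h₀ ^ e * s ^ e := by
    have h1 : l ∣ 1 - X ^ k := ⟨l', hll.symm⟩
    have h2 : (1 : Polynomial (ZMod p)) - X ^ k = -(h₀ ^ e * s ^ e) := by
      rw [← hXk]; ring
    rw [h2, dvd_neg] at h1
    exact h1
  obtain ⟨hl, sl, hhl, hsl, hldecomp⟩ := exists_dvd_and_dvd_of_dvd_mul hlf
  obtain ⟨h', hh'⟩ := hhl
  obtain ⟨s', hs'⟩ := hsl
  have hXkne : (X ^ k - 1 : Polynomial (ZMod p)) ≠ 0 := X_pow_sub_one_ne_zero hk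
  have hlne : l ≠ 0 := by
    intro h0
    apply hXkne
    have h1 : (1 : Polynomial (ZMod p)) - X ^ k = 0 := by rw [← hll, h0, zero_mul]
    linear_combination -h1
  have hl'eq : l' = -(h' * s') := by
    apply mul_left_cancel₀ hlne
    rw [hll, hldecomp]
    calc (1 : Polynomial (ZMod p)) - X ^ k = -(h₀ ^ e * s ^ e) := by rw [← hXk]; ring
      _ = -(hl * h' * (sl * s')) := by rw [hh', hs']
      _ = hl * sl * -(h' * s') := by ring
  have hh₀e0 : (h₀ ^ e : Polynomial (ZMod p)) ≠ 0 := pow_ne_zero _ hh₀0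
  have hhl0 : hl ≠ 0 := fun h0 => hh₀e0 (by rw [hh', h0, zero_mul])
  have hh'0 : h' ≠ 0 := fun h0 => hh₀e0 (by rw [hh', h0, mul_zero])
  have hse0 : (s ^ e : Polynomial (ZMod p)) ≠ 0 := pow_ne_zero _ hs0
  -- first gcd
  have hcop_g_se : IsCoprime g (s ^ e) := by
    have h1 : IsCoprime ((X ^ n₀ - 1 : Polynomial (ZMod p)) ^ E) (s ^ e) :=
      (hcop_ns.pow_left).pow_right
    rwa [hpowg] at h1
  have hclg : Associated (EuclideanDomain.gcd l g) hl := by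
    apply associated_of_dvd_dvd
    · have hc_l : EuclideanDomain.gcd l g ∣ l := EuclideanDomain.gcd_dvd_left _ _
      have hc_g : EuclideanDomain.gcd l g ∣ g := EuclideanDomain.gcd_dvd_right _ _
      have hcop_csl : IsCoprime (EuclideanDomain.gcd l g) sl :=
        (hcop_g_se.of_isCoprime_of_dvd_left hc_g).of_isCoprime_of_dvd_right ⟨s', hs'⟩
      exact hcop_csl.dvd_of_dvd_mul_right (by rw [← hldecomp]; exact hc_l)
    · refine EuclideanDomain.dvd_gcd ⟨sl, hldecomp⟩ ?_
      calc hl ∣ h₀ ^ e := ⟨h', hh'⟩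
        _ ∣ h₀ ^ E := pow_dvd_pow h₀ heE
        _ ∣ g := by rw [hgfac]; exact dvd_mul_right _ _
  -- second gcd
  set M := h' * (h₀ ^ (E - e) * r ^ E) with hMdef
  have hMg : M ∣ g := by
    have h1 : h' * h₀ ^ (E - e) ∣ h₀ ^ E := by
      refine ⟨hl, ?_⟩
      rw [← pow_sub_mul_pow h₀ heE, hh']
      ring
    have h2 : M ∣ h₀ ^ E * r ^ E := by
      calc M = h' * h₀ ^ (E - e) * r ^ E := by rw [hMdef]; ring
        _ ∣ h₀ ^ E * r ^ E := mul_dvd_mul h1 dvd_rfl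
    rwa [← hgfac] at h2
  have heqlt : l' * t = M * (-s') := by
    rw [hl'eq, ht, hMdef]; ring
  have hcM : Associated (EuclideanDomain.gcd (l' * t) g) M := by
    apply associated_of_dvd_dvd
    · have hc_lt : EuclideanDomain.gcd (l' * t) g ∣ l' * t := EuclideanDomain.gcd_dvd_left _ _
      have hc_g : EuclideanDomain.gcd (l' * t) g ∣ g := EuclideanDomain.gcd_dvd_right _ _
      have hcop_cs' : IsCoprime (EuclideanDomain.gcd (l' * t) g) s' :=
        (hcop_g_se.of_isCoprime_of_dvd_left hc_g).of_isCoprime_of_dvd_right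
          ⟨sl, by rw [hs']; ring⟩
      exact (hcop_cs'.neg_right).dvd_of_dvd_mul_right (by rw [← heqlt]; exact hc_lt)
    · exact EuclideanDomain.dvd_gcd ⟨-s', heqlt⟩ hMg
  -- degree bookkeeping
  have hdegh₀ : h₀.natDegree = d₀ := by rw [hh₀]; exact natDegree_X_pow_sub_one
  have hdegr : r.natDegree = n₀ - d₀ := by
    have h1 : r.natDegree + h₀.natDegree = n₀ := by
      rw [← Polynomial.natDegree_mul hr0 hh₀0, hrh, natDegree_X_pow_sub_one]
    omega
  have hd₀n₀le : d₀ ≤ n₀ := Nat.le_of_dvd hn₀pos hd₀n₀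
  have hdeghlh' : hl.natDegree + h'.natDegree = e * d₀ := by
    have h1 : (h₀ ^ e).natDegree = e * d₀ := by
      rw [Polynomial.natDegree_pow, hdegh₀]
    rw [← h1, hh', Polynomial.natDegree_mul hhl0 hh'0]
  have hdegM : M.natDegree = h'.natDegree + ((E - e) * d₀ + E * (n₀ - d₀)) := by
    rw [hMdef, Polynomial.natDegree_mul hh'0
        (mul_ne_zero (pow_ne_zero _ hh₀0) (pow_ne_zero _ hr0)),
      Polynomial.natDegree_mul (pow_ne_zero _ hh₀0) (pow_ne_zero _ hr0),
      Polynomial.natDegree_pow, Polynomial.natDegree_pow, hdegh₀, hdegr]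
  rw [natDegree_eq_of_associated hclg, natDegree_eq_of_associated hcM, hdegM]
  have hsub1 : (E - e) * d₀ = E * d₀ - e * d₀ := Nat.sub_mul E e d₀
  have hsub2 : E * (n₀ - d₀) = n₀ * E - d₀ * E := by
    rw [Nat.mul_comm E (n₀ - d₀)]; exact Nat.sub_mul n₀ d₀ E
  have hle1 : e * d₀ ≤ E * d₀ := Nat.mul_le_mul_right d₀ heE
  have hle2 : d₀ * E ≤ n₀ * E := Nat.mul_le_mul_right E hd₀n₀le
  have hEn : E * n₀ = n := hnfac
  have hcomm1 : E * d₀ = d₀ * E := Nat.mul_comm E d₀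
  have hcomm2 : E * n₀ = n₀ * E := Nat.mul_comm E n₀
  omega

end Arith

open LinHelper Eval Arith in
set_option maxHeartbeats 1000000 in
theorem stmt13 (p : ℕ) [Fact p.Prime] (n k : ℕ) (hn : 0 < n) (hk : 0 < k)
    (d : ℕ) (hd : d = Nat.gcd n k) (hpd : ¬ p ∣ k / d)
    (l l' : Polynomial (ZMod p))
    (h : (linAssoc p l).comp (linAssoc p l') = X - X ^ p ^ k)
    (a : GaloisField p n) :
    (∃ x : GaloisField p n, aeval x (linAssoc p l) = a) ↔
      aeval (aeval a (Tpoly p d n)) (linAssoc p l') = 0 := by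
  classical
  have hprime : p.Prime := Fact.out
  have hdpos : 0 < d := hd ▸ Nat.gcd_pos_of_pos_left k hn
  have hdn : d ∣ n := hd ▸ Nat.gcd_dvd_left n k
  have hdk : d ∣ k := hd ▸ Nat.gcd_dvd_right n k
  set t := ∑ i ∈ Finset.range (n / d), ((X : Polynomial (ZMod p)) ^ d) ^ i with htdef
  have hT : Tpoly p d n = linAssoc p t := by
    have h1 : linAssoc p t
        = ∑ i ∈ Finset.range (n / d), linAssoc p (((X : Polynomial (ZMod p)) ^ d) ^ i) :=
      map_sum (linH p) _ _
    rw [Tpoly, h1]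
    apply Finset.sum_congr rfl
    intro i _
    rw [← pow_mul, Polynomial.X_pow_eq_monomial (d * i), linAssoc_monomial, map_one, one_mul]
  have hll : l * l' = 1 - X ^ k := by
    apply linAssoc_injective
    rw [← linAssoc_comp, h, linAssoc_one_sub_X_pow k hk]
  have hth : t * (X ^ d - 1) = X ^ n - 1 := by
    rw [htdef, geom_sum_mul, ← pow_mul, Nat.mul_div_cancel' hdn]
  have hXn0 : (X ^ n - 1 : Polynomial (ZMod p)) ≠ 0 := X_pow_sub_one_ne_zero hn
  have ht0 : t ≠ 0 := fun h0 => hXn0 (by rw [← hth, h0, zero_mul])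
  have hXk0 : (X ^ k - 1 : Polynomial (ZMod p)) ≠ 0 := X_pow_sub_one_ne_zero hk
  have h1Xk0 : (1 - X ^ k : Polynomial (ZMod p)) ≠ 0 := fun h0 => hXk0 (by linear_combination -h0)
  have hl0 : l ≠ 0 := fun h0 => h1Xk0 (by rw [← hll, h0, zero_mul])
  have hl'0 : l' ≠ 0 := fun h0 => h1Xk0 (by rw [← hll, h0, mul_zero])
  have hRHS : aeval (aeval a (Tpoly p d n)) (linAssoc p l') = phi p n (l' * t) a := by
    rw [phi_mul, phi_apply, phi_apply, hT]
  -- forward inclusion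
  have hincl : ∀ x : GaloisField p n, phi p n (l' * t) (phi p n l x) = 0 := by
    intro x
    rw [← phi_mul]
    have hassoc : l' * t * l = (1 - X ^ k) * t := by rw [← hll]; ring
    rw [hassoc, phi_mul]
    set y := phi p n t x with hy
    have hyx : y = ∑ i ∈ Finset.range (n / d), x ^ p ^ (d * i) := by
      rw [hy, phi_apply, ← hT, Tpoly, map_sum]
      apply Finset.sum_congr rfl
      intro i _
      rw [map_pow, aeval_X]
    have hyd : y ^ p ^ d = y := by
      set m := n / d with hm
      have hm0 : m ≠ 0 := by
        intro h0
        exact hn.ne' (by rw [← Nat.mul_div_cancel' hdn, ← hm, h0, Nat.mul_zero])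
      have hterm : ∀ i, (x ^ p ^ (d * i)) ^ p ^ d = x ^ p ^ (d * (i + 1)) := by
        intro i
        rw [← pow_mul, ← pow_add, ← Nat.mul_succ]
      have hf0 : x ^ p ^ (d * 0) = x := by simp
      have hfm : x ^ p ^ (d * m) = x := by
        rw [hm, Nat.mul_div_cancel' hdn]
        exact pow_card_self hn x
      have h5 : (∑ i ∈ Finset.range m, x ^ p ^ (d * (i + 1))) + x ^ p ^ (d * 0)
          = (∑ i ∈ Finset.range m, x ^ p ^ (d * i)) + x ^ p ^ (d * m) := by
        rw [← Finset.sum_range_succ' (fun i => x ^ p ^ (d * i)) m,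
          Finset.sum_range_succ]
      rw [hyx, sum_pow_char_pow]
      calc (∑ i ∈ Finset.range m, (x ^ p ^ (d * i)) ^ p ^ d)
          = ∑ i ∈ Finset.range m, x ^ p ^ (d * (i + 1)) := by
            exact Finset.sum_congr rfl fun i _ => hterm i
        _ = ∑ i ∈ Finset.range m, x ^ p ^ (d * i) := by
            have h6 := h5
            rw [hf0, hfm] at h6
            exact add_right_cancel h6
    have hydj : ∀ j : ℕ, y ^ p ^ (d * j) = y := by
      intro j
      induction j with
      | zero => simp
      | succ j ih => rw [Nat.mul_succ, pow_add, pow_mul, ih, hyd]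
    have hyk : y ^ p ^ k = y := by
      have hk' : d * (k / d) = k := Nat.mul_div_cancel' hdk
      rw [← hk']
      exact hydj (k / d)
    show phi p n (1 - X ^ k) y = 0
    rw [phi_apply, linAssoc_one_sub_X_pow k hk]
    rw [map_sub, map_pow, aeval_X, hyk, sub_self]
  -- counting
  letI : Fintype (GaloisField p n) := Fintype.ofFinite (GaloisField p n)
  set φA := phi p n l with hφA
  set φB := phi p n (l' * t) with hφB
  have hcardF : Nat.card (GaloisField p n) = p ^ n := GaloisField.card p n hn.ne'
  have hkerA : Nat.card φA.ker = p ^ (EuclideanDomain.gcd l (X ^ n - 1)).natDegree := by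
    rw [← card_ker hn l hl0]
    exact Nat.card_congr (Equiv.subtypeEquivRight fun x => Iff.rfl)
  have hkerB : Nat.card φB.ker
      = p ^ (EuclideanDomain.gcd (l' * t) (X ^ n - 1)).natDegree := by
    rw [← card_ker hn (l' * t) (mul_ne_zero hl'0 ht0)]
    exact Nat.card_congr (Equiv.subtypeEquivRight fun x => Iff.rfl)
  have hD := key_degree n k d hn hk hd hpd l l' hll
  rw [← htdef] at hD
  have hrange : Nat.card φA.range = Nat.card φB.ker := by
    have h1 := card_eq_card_range_mul_card_ker φA
    rw [hcardF, hkerA] at h1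
    rw [hkerB]
    set D1 := (EuclideanDomain.gcd l (X ^ n - 1)).natDegree with hD1
    set D2 := (EuclideanDomain.gcd (l' * t) (X ^ n - 1)).natDegree with hD2
    have h2 : p ^ n = p ^ D2 * p ^ D1 := by rw [← pow_add, ← hD]; ring_nf
    rw [h2] at h1
    exact Nat.eq_of_mul_eq_mul_right (Nat.pow_pos hprime.pos) h1.symm
  have hfin : ((φB.ker : Set (GaloisField p n))).Finite := Set.toFinite _
  have hsub : (φA.range : Set (GaloisField p n)) ⊆ (φB.ker : Set (GaloisField p n)) := by
    rintro b ⟨x, rfl⟩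
    exact hincl x
  have hseteq : (φA.range : Set (GaloisField p n)) = (φB.ker : Set (GaloisField p n)) := by
    apply Set.eq_of_subset_of_ncard_le hsub ?_ hfin
    have e1 : (φA.range : Set (GaloisField p n)).ncard = Nat.card φA.range :=
      (Nat.card_coe_set_eq _).symm
    have e2 : (φB.ker : Set (GaloisField p n)).ncard = Nat.card φB.ker :=
      (Nat.card_coe_set_eq _).symm
    rw [e1, e2, hrange]
  constructor
  · rintro ⟨x, hx⟩
    have hmem : a ∈ (φA.range : Set (GaloisField p n)) := ⟨x, hx⟩
    rw [hseteq] at hmem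
    rw [hRHS]
    exact hmem
  · intro ha
    have hmem : a ∈ (φB.ker : Set (GaloisField p n)) := by
      show φB a = 0
      rw [hφB, ← hRHS]
      exact ha
    rw [← hseteq] at hmem
    exact hmem
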